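/- Let z : ℝ → ℂ be a continuous 1-periodic function with Fourier coefficients ζ_r. Then conj(z(t)) = z(t + 1/2) for all t ∈ ℝ if and only if ζ_{−r} = (−1)^r · conj(ζ_r) for all r ∈ ℤ. (This functional equation is the condition that the underlying curve of an n-body choreography, n odd, admits the symmetry of the exceptional group C'(n,2).) -/

import Mathlib

/-! Pass to the circle `ℝ ⧸ ℤ`, where `ζ_r` is Mathlib's `fourierCoeff` of the lift of `z`.
There conjugation sends `ζ_{-r}` to `conj ζ_r` and translation by `1/2` multiplies `ζ_r` by
`e^{πir} = (-1)^r`, so the two sides of `conj z = z(· + 1/2)` have the same coefficients exactly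
when `ζ_{-r} = (-1)^r conj ζ_r`. A continuous function on the circle is determined by its Fourier
coefficients, these being its coordinates in the Hilbert basis `fourierBasis` of `L²`. -/

noncomputable section

open Complex

/-- The `r`-th Fourier coefficient `ζ_r = ∫₀¹ z(t) e^{-2πirt} dt` of a `1`-periodic
function `z : ℝ → ℂ`. -/
def fourierCoef (z : ℝ → ℂ) (r : ℤ) : ℂ :=
  ∫ t in (0 : ℝ)..1, z t * Complex.exp (-(2 * (Real.pi : ℂ) * Complex.I * (r : ℂ) * (t : ℂ)))

open MeasureTheory AddCircle ComplexConjugate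

namespace AddCircle

variable {T : ℝ}

theorem fourier_neg_apply_sub (n : ℤ) (x a : AddCircle T) :
    fourier (-n) (x - a) = fourier n a * fourier (-n) x := by
  rw [fourier_apply, fourier_apply, fourier_apply, sub_eq_add_neg, zsmul_add, toCircle_add,
    Circle.coe_mul, neg_zsmul, neg_zsmul, zsmul_neg, neg_neg, mul_comm]

theorem fourier_coe_half_period (hT : T ≠ 0) (n : ℤ) :
    fourier n ((T / 2 : ℝ) : AddCircle T) = (-1 : ℂ) ^ n := by
  rw [fourier_coe_apply, ← exp_pi_mul_I, ← exp_int_mul]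
  have : (T : ℂ) ≠ 0 := ofReal_ne_zero.mpr hT
  congr 1
  push_cast
  field_simp

variable [Fact (0 < T)]

theorem eq_of_fourierCoeff_eq {f g : AddCircle T → ℂ} (hf : Continuous f) (hg : Continuous g)
    (h : ∀ n, fourierCoeff f n = fourierCoeff g n) : f = g := by
  have hLp : ContinuousMap.toLp 2 haarAddCircle ℂ (⟨f, hf⟩ : C(AddCircle T, ℂ)) =
      ContinuousMap.toLp 2 haarAddCircle ℂ ⟨g, hg⟩ :=
    fourierBasis.repr.injective <| lp.ext <| funext fun n => by
      simp only [fourierBasis_repr, fourierCoeff_toLp]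
      exact h n
  exact congrArg DFunLike.coe (ContinuousMap.toLp_injective haarAddCircle hLp)

theorem fourierCoeff_conj (f : AddCircle T → ℂ) (n : ℤ) :
    fourierCoeff (fun x => conj (f x)) n = conj (fourierCoeff f (-n)) := by
  rw [fourierCoeff, fourierCoeff, ← integral_conj]
  simp only [smul_eq_mul, map_mul, fourier_neg, neg_neg]

theorem fourierCoeff_comp_add_right (f : AddCircle T → ℂ) (a : AddCircle T) (n : ℤ) :
    fourierCoeff (fun x => f (x + a)) n = fourier n a * fourierCoeff f n := by
  rw [fourierCoeff, fourierCoeff, ← integral_sub_right_eq_self _ a, ← integral_const_mul]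
  congr 1 with x
  rw [sub_add_cancel, smul_eq_mul, smul_eq_mul, fourier_neg_apply_sub, mul_assoc]

end AddCircle

theorem fourierCoef_eq_fourierCoeff_lift [Fact ((0 : ℝ) < 1)] {z : ℝ → ℂ}
    (hz : Function.Periodic z 1) (r : ℤ) : fourierCoef z r = fourierCoeff hz.lift r := by
  rw [fourierCoeff_eq_intervalIntegral _ _ 0, fourierCoef, zero_add, div_one, one_smul]
  refine intervalIntegral.integral_congr fun t _ => ?_
  simp only [fourier_coe_apply, Function.Periodic.lift_coe, smul_eq_mul]
  rw [mul_comm]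
  congr 2
  push_cast
  ring

/-- A continuous `1`-periodic curve `z` satisfies
`conj (z t) = z (t + 1/2)` for all `t` (the symmetry of the exceptional group `C'(n,2)`)
if and only if its Fourier coefficients satisfy `ζ_{-r} = (-1)^r conj (ζ_r)` for all `r`. -/
theorem statement_8 (z : ℝ → ℂ) (hz : Continuous z) (hper : ∀ t, z (t + 1) = z t) :
    (∀ t : ℝ, (starRingEnd ℂ) (z t) = z (t + 1 / 2)) ↔
    (∀ r : ℤ, fourierCoef z (-r) = (-1 : ℂ) ^ r * (starRingEnd ℂ) (fourierCoef z r)) := by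
  have : Fact ((0 : ℝ) < 1) := ⟨one_pos⟩
  have hperiodic : Function.Periodic z 1 := hper
  set f := hperiodic.lift
  have hf : Continuous f := hz.quotient_liftOn' _
  calc (∀ t, conj (z t) = z (t + 1 / 2))
      ↔ (fun x => conj (f x)) = fun x => f (x + ((1 / 2 : ℝ) : AddCircle (1 : ℝ))) := by
        rw [funext_iff, QuotientAddGroup.mk_surjective.forall]
        simp only [f, ← QuotientAddGroup.mk_add, Function.Periodic.lift_coe]
    _ ↔ ∀ n, fourierCoeff (fun x => conj (f x)) n =
          fourierCoeff (fun x => f (x + ((1 / 2 : ℝ) : AddCircle (1 : ℝ)))) n :=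
        ⟨fun h n => by rw [h], eq_of_fourierCoeff_eq (continuous_conj.comp hf)
          (hf.comp (continuous_add_const _))⟩
    _ ↔ ∀ n : ℤ, conj (fourierCoef z (-n)) = (-1) ^ n * fourierCoef z n := by
        simp only [fourierCoeff_conj, fourierCoeff_comp_add_right,
          fourier_coe_half_period one_ne_zero, fourierCoef_eq_fourierCoeff_lift hperiodic, f]
    _ ↔ _ := forall_congr' fun n => by
        rw [starRingEnd_apply, star_eq_iff_star_eq, ← starRingEnd_apply, map_mul, map_zpow₀,
          map_neg, map_one, eq_comm]

end
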